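/- Assume Assumption (†). Let V be a subvariety of ℙ^m over F with V(F) infinite. Then V contains an irreducible locally closed subvariety W ⊆ V which is strongly saturated and satisfies lim_{B→∞} N(W,B)/N(V,B) > 0. -/

import Mathlib

open Filter Topology

namespace ProjSat

/-- The set of `F`-rational points of projective `m`-space, modelled as the
projectivization of `F^(m+1)`. -/
abbrev Pt (F : Type) [Field F] (m : ℕ) := Projectivization F (Fin (m + 1) → F)

variable (F : Type) [Field F] (m : ℕ)

/-- A polynomial `p` vanishes at a point `x ∈ ℙ^m(F)` if it vanishes on every
vector representing `x`. -/
def Vanishes (p : MvPolynomial (Fin (m + 1)) F) (x : Pt F m) : Prop :=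
  ∀ (v : Fin (m + 1) → F) (hv : v ≠ 0),
    Projectivization.mk F v hv = x → MvPolynomial.eval v p = 0

/-- The Zariski topology on `ℙ^m(F)`: it is generated by the complements of the
zero loci of homogeneous polynomials. -/
instance zariskiTopology : TopologicalSpace (Pt F m) :=
  TopologicalSpace.generateFrom
    { U | ∃ (p : MvPolynomial (Fin (m + 1)) F) (d : ℕ),
        p.IsHomogeneous d ∧ U = { x | ¬ Vanishes F m p x } }

variable {F m}

/-- The dimension of a subvariety: the topological Krull dimension of the subspace. -/
noncomputable def dimv (V : Set (Pt F m)) : WithBot ℕ∞ :=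
  topologicalKrullDim V

variable (H : Pt F m → ℝ)

/-- The height counting function `N(V, B) = #{x ∈ V(F) : H(x) ≤ B}`. -/
noncomputable def Ncount (V : Set (Pt F m)) (B : ℝ) : ℕ :=
  {x ∈ V | H x ≤ B}.ncard

/-- The counting ratio `B ↦ N(V', B) / N(V, B)`. -/
noncomputable def ratio (V' V : Set (Pt F m)) : ℝ → ℝ :=
  fun B => (Ncount H V' B : ℝ) / (Ncount H V B : ℝ)

/-- Assumption (†): for all locally closed subvarieties `V' ⊆ V` of `ℙ^m` over `F`
with `V(F)` infinite, the limit `lim_{B→∞} N(V',B)/N(V,B)` exists. -/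
def Dagger : Prop :=
  ∀ V' V : Set (Pt F m), IsLocallyClosed V' → IsLocallyClosed V → V' ⊆ V →
    V.Infinite → ∃ L : ℝ, Tendsto (ratio H V' V) atTop (𝓝 L)

/-- `U` is a dense Zariski open subset of `V`. -/
def IsDenseOpenIn (U V : Set (Pt F m)) : Prop :=
  (∃ O : Set (Pt F m), IsOpen O ∧ U = V ∩ O) ∧ V ⊆ closure U

/-- `V` is weakly saturated: `V` is irreducible, `V(F)` is infinite, and for every
locally closed subvariety `W ⊆ V` with `dim W < dim V` one has
`lim_{B→∞} N(W,B)/N(V,B) < 1`. -/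
def WeaklySaturated (V : Set (Pt F m)) : Prop :=
  IsIrreducible V ∧ V.Infinite ∧
    ∀ W : Set (Pt F m), IsLocallyClosed W → W ⊆ V → dimv W < dimv V →
      ∃ L : ℝ, Tendsto (ratio H W V) atTop (𝓝 L) ∧ L < 1

/-- `V` is strongly saturated: `V` is irreducible, `V(F)` is infinite, and for every
dense Zariski open subset `U ⊆ V` one has `lim_{B→∞} N(U,B)/N(V,B) = 1`. -/
def StronglySaturated (V : Set (Pt F m)) : Prop :=
  IsIrreducible V ∧ V.Infinite ∧
    ∀ U : Set (Pt F m), IsDenseOpenIn U V →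
      Tendsto (ratio H U V) atTop (𝓝 1)

end ProjSat

open ProjSat Filter Topology

/-!
Among the closed irreducible subsets `Z` of the Zariski closure of `V` for which `Z ∩ V` has
positive density in `V`, pick a minimal one; it exists because the finitely many irreducible
components of `closure V` cover `V`, so their densities add up to at least `1`, and because the
Zariski topology on `ℙ^m(F)` is Noetherian (it is coarser than the topology pulled back from
`Spec F[x₀, …, xₘ]`). Take `W = Z ∩ V`. If `U = W ∩ O` is dense open in `W`, then `W \ U` lies in
the proper closed subset `Z \ O` of `Z`, whose irreducible components have density `0` by
minimality and (†); hence `U` has density `1` in `W`.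
-/

theorem MvPolynomial.IsHomogeneous.eval_smul {σ R : Type*} [CommSemiring R]
    {p : MvPolynomial σ R} {d : ℕ} (hp : p.IsHomogeneous d) (c : R) (v : σ → R) :
    MvPolynomial.eval (c • v) p = c ^ d * MvPolynomial.eval v p := by
  rw [MvPolynomial.eval_eq, MvPolynomial.eval_eq, Finset.mul_sum]
  refine Finset.sum_congr rfl fun e he => ?_
  have hdeg : ∑ i ∈ e.support, e i = d := by
    rw [← hp (MvPolynomial.mem_support_iff.mp he)]
    simp [Finsupp.weight_apply, Finsupp.sum]
  simp only [Pi.smul_apply, smul_eq_mul, mul_pow, Finset.prod_mul_distrib,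
    Finset.prod_pow_eq_pow_sum, hdeg]
  ring

theorem IsPreirreducible.inter_isLocallyClosed {X : Type*} [TopologicalSpace X] {Z V : Set X}
    (hZ : IsPreirreducible Z) (hZV : Z ⊆ closure V) (hV : IsLocallyClosed V) :
    IsPreirreducible (Z ∩ V) := by
  have hO := hV.isOpen_coborder
  have hZV' : Z ∩ V = Z ∩ coborder V := by
    refine subset_antisymm (Set.inter_subset_inter_right Z subset_coborder) ?_
    rintro x ⟨hxZ, hxO⟩
    exact ⟨hxZ, coborder_inter_closure.subset ⟨hxO, hZV hxZ⟩⟩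
  rw [hZV']
  rintro u v hu hv ⟨x, ⟨hxZ, hxO⟩, hxu⟩ ⟨y, ⟨hyZ, hyO⟩, hyv⟩
  obtain ⟨z, hzZ, ⟨hzO, hzu⟩, -, hzv⟩ := hZ (coborder V ∩ u) (coborder V ∩ v) (hO.inter hu)
    (hO.inter hv) ⟨x, hxZ, hxO, hxu⟩ ⟨y, hyZ, hyO, hyv⟩
  exact ⟨z, ⟨hzZ, hzO⟩, hzu, hzv⟩

namespace ProjSat

open MvPolynomial

variable {F : Type} [Field F] {m : ℕ}

section Noetherian

theorem vanishes_iff_eval_rep {p : MvPolynomial (Fin (m + 1)) F} {d : ℕ}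
    (hp : p.IsHomogeneous d) (x : Pt F m) : Vanishes F m p x ↔ eval x.rep p = 0 := by
  refine ⟨fun h => h x.rep x.rep_nonzero x.mk_rep, fun h w hw hwx => ?_⟩
  obtain ⟨a, rfl⟩ := (Projectivization.mk_eq_mk_iff F _ _ hw x.rep_nonzero).mp
    (hwx.trans x.mk_rep.symm)
  rw [Units.smul_def, hp.eval_smul, h, mul_zero]

noncomputable def toPrimeSpectrum (x : Pt F m) : PrimeSpectrum (MvPolynomial (Fin (m + 1)) F) :=
  ⟨RingHom.ker (eval x.rep), RingHom.ker_isPrime _⟩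

theorem induced_toPrimeSpectrum_le_zariskiTopology :
    TopologicalSpace.induced toPrimeSpectrum inferInstance ≤ zariskiTopology F m := by
  refine TopologicalSpace.le_generateFrom_iff_subset_isOpen.mpr ?_
  rintro _ ⟨p, d, hp, rfl⟩
  refine ⟨PrimeSpectrum.basicOpen p, (PrimeSpectrum.basicOpen p).isOpen, ?_⟩
  ext x
  simp [toPrimeSpectrum, vanishes_iff_eval_rep hp]

instance : TopologicalSpace.NoetherianSpace (Pt F m) :=
  let τ : TopologicalSpace (Pt F m) := .induced toPrimeSpectrum inferInstance
  have hτ : @TopologicalSpace.NoetherianSpace _ τ :=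
    TopologicalSpace.noetherianSpace_iff_isCompact.mpr fun _ =>
      (Topology.IsInducing.induced toPrimeSpectrum).isCompact_iff.mpr
        (TopologicalSpace.NoetherianSpace.isCompact _)
  @TopologicalSpace.noetherianSpace_of_surjective _ _ τ (zariskiTopology F m) hτ id
    (continuous_id_iff_le.mpr induced_toPrimeSpectrum_le_zariskiTopology) Function.surjective_id

end Noetherian

section Counting

variable {H : Pt F m → ℝ}

theorem ratio_nonneg (A V : Set (Pt F m)) (B : ℝ) : 0 ≤ ratio H A V B := by
  unfold ratio; positivity

theorem ncount_biUnion_le {ι : Type*} (T : Finset ι) (f : ι → Set (Pt F m)) (B : ℝ) :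
    Ncount H (⋃ i ∈ T, f i) B ≤ ∑ i ∈ T, Ncount H (f i) B := by
  classical
  induction T using Finset.induction_on with
  | empty => simp [Ncount]
  | insert a T ha ih =>
    rw [Finset.sum_insert ha, Finset.set_biUnion_insert]
    calc Ncount H (f a ∪ ⋃ i ∈ T, f i) B
        ≤ Ncount H (f a) B + Ncount H (⋃ i ∈ T, f i) B :=
          (Set.sep_union (p := (H · ≤ B)) ▸ Set.ncard_union_le _ _ :)
      _ ≤ _ := by gcongr

variable (hN : ∀ B : ℝ, {x : Pt F m | H x ≤ B}.Finite)
include hN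

theorem finite_sep_height_le (A : Set (Pt F m)) (B : ℝ) : {x ∈ A | H x ≤ B}.Finite :=
  (hN B).subset fun _ hx => hx.2

theorem ncount_mono {A A' : Set (Pt F m)} (h : A ⊆ A') (B : ℝ) :
    Ncount H A B ≤ Ncount H A' B :=
  Set.ncard_le_ncard (fun _ hx => ⟨h hx.1, hx.2⟩) (finite_sep_height_le hN A' B)

theorem ncount_sdiff_add {U W : Set (Pt F m)} (h : U ⊆ W) (B : ℝ) :
    Ncount H (W \ U) B + Ncount H U B = Ncount H W B := by
  have hsep : {x ∈ W \ U | H x ≤ B} = {x ∈ W | H x ≤ B} \ {x ∈ U | H x ≤ B} := by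
    ext x; simp only [Set.mem_sdiff, Set.mem_ofPred_eq]; tauto
  rw [Ncount, hsep]
  exact Set.ncard_sdiff_add_ncard_of_subset (fun x hx => ⟨h hx.1, hx.2⟩)
    (finite_sep_height_le hN W B)

theorem tendsto_ratio_zero_of_subset_biUnion {ι : Type*} (T : Finset ι) (f : ι → Set (Pt F m))
    {A V : Set (Pt F m)} (hA : A ⊆ ⋃ i ∈ T, f i)
    (hf : ∀ i ∈ T, Tendsto (ratio H (f i) V) atTop (𝓝 0)) :
    Tendsto (ratio H A V) atTop (𝓝 0) := by
  have hle : ∀ B, ratio H A V B ≤ ∑ i ∈ T, ratio H (f i) V B := fun B => by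
    simp only [ratio, ← Finset.sum_div]
    gcongr
    exact_mod_cast (ncount_mono hN hA B).trans (ncount_biUnion_le T f B)
  exact squeeze_zero (ratio_nonneg A V) hle (by simpa using tendsto_finsetSum T hf)

theorem tendsto_ratio_self {V : Set (Pt F m)} (hV : V.Nonempty) :
    Tendsto (ratio H V V) atTop (𝓝 1) := by
  obtain ⟨v, hv⟩ := hV
  refine tendsto_const_nhds.congr' ?_
  filter_upwards [eventually_ge_atTop (H v)] with B hB
  have : 0 < Ncount H V B := (Set.ncard_pos (finite_sep_height_le hN V B)).mpr ⟨v, hv, hB⟩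
  exact (div_self (by positivity)).symm

theorem tendsto_ncount_atTop {A : Set (Pt F m)} (hA : A.Infinite) :
    Tendsto (fun B => (Ncount H A B : ℝ)) atTop atTop := by
  refine tendsto_atTop.mpr fun b => ?_
  obtain ⟨t, htA, htfin, htcard⟩ := hA.exists_subset_ncard_eq ⌈b⌉₊
  obtain ⟨B₀, hB₀⟩ := (htfin.image H).bddAbove
  filter_upwards [eventually_ge_atTop B₀] with B hB
  have hsub : t ⊆ {x ∈ A | H x ≤ B} := fun y hy => ⟨htA hy, (hB₀ ⟨y, hy, rfl⟩).trans hB⟩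
  calc b ≤ ⌈b⌉₊ := Nat.le_ceil b
    _ = t.ncard := by rw [htcard]
    _ ≤ Ncount H A B := by
      exact_mod_cast Set.ncard_le_ncard hsub (finite_sep_height_le hN A B)

theorem tendsto_ratio_zero_of_finite {A V : Set (Pt F m)} (hA : A.Finite) (hV : V.Infinite) :
    Tendsto (ratio H A V) atTop (𝓝 0) := by
  have hle : ∀ B, ratio H A V B ≤ A.ncard / Ncount H V B := fun B => by
    unfold ratio
    gcongr
    exact_mod_cast Set.ncard_le_ncard (Set.sep_subset A _) hA
  exact squeeze_zero (ratio_nonneg A V) hle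
    (tendsto_const_nhds.div_atTop (tendsto_ncount_atTop hN hV))

/-- `N(U,B)/N(W,B) = 1 - (N(W \ U,B)/N(V,B)) / (N(W,B)/N(V,B))` once `N(W,B), N(V,B) ≠ 0`. -/
theorem tendsto_ratio_one_of_tendsto_sdiff {U W V : Set (Pt F m)} (hUW : U ⊆ W) {δ : ℝ}
    (hW : Tendsto (ratio H W V) atTop (𝓝 δ)) (hδ : δ ≠ 0)
    (hdiff : Tendsto (ratio H (W \ U) V) atTop (𝓝 0)) :
    Tendsto (ratio H U W) atTop (𝓝 1) := by
  have hlim : Tendsto (fun B => 1 - ratio H (W \ U) V B / ratio H W V B) atTop (𝓝 1) := by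
    simpa using tendsto_const_nhds.sub (hdiff.div hW hδ)
  refine hlim.congr' ?_
  filter_upwards [hW.eventually_ne hδ] with B hB
  obtain ⟨hWB, hVB⟩ := div_ne_zero_iff.mp hB
  have hsplit : (Ncount H (W \ U) B : ℝ) + Ncount H U B = Ncount H W B := by
    exact_mod_cast ncount_sdiff_add hN hUW B
  simp only [ratio]
  rw [div_div_div_cancel_right₀ hVB, eq_div_iff hWB, sub_mul, one_mul, div_mul_cancel₀ _ hWB]
  linarith

end Counting

variable (H : Pt F m → ℝ)

def HasPosDensityIn (A V : Set (Pt F m)) : Prop :=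
  ∃ L : ℝ, Tendsto (ratio H A V) atTop (𝓝 L) ∧ 0 < L

variable {H}

theorem HasPosDensityIn.infinite (hN : ∀ B : ℝ, {x : Pt F m | H x ≤ B}.Finite)
    {A V : Set (Pt F m)} (hA : HasPosDensityIn H A V) (hV : V.Infinite) : A.Infinite := by
  obtain ⟨L, hL, hLpos⟩ := hA
  intro hfin
  exact hLpos.ne' (tendsto_nhds_unique hL (tendsto_ratio_zero_of_finite hN hfin hV))

theorem tendsto_ratio_zero_of_not_hasPosDensityIn (hdagger : Dagger H) {A V : Set (Pt F m)}
    (hA : IsLocallyClosed A) (hV : IsLocallyClosed V) (hAV : A ⊆ V) (hVinf : V.Infinite)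
    (h : ¬ HasPosDensityIn H A V) : Tendsto (ratio H A V) atTop (𝓝 0) := by
  obtain ⟨L, hL⟩ := hdagger A V hA hV hAV hVinf
  have hL0 : L = 0 :=
    le_antisymm (not_lt.mp fun hpos => h ⟨L, hL, hpos⟩) (ge_of_tendsto' hL (ratio_nonneg A V))
  rwa [hL0] at hL

open TopologicalSpace

theorem tendsto_ratio_zero_of_subset_closeds (hN : ∀ B : ℝ, {x : Pt F m | H x ≤ B}.Finite)
    {A V : Set (Pt F m)} (C : Closeds (Pt F m)) (hA : A ⊆ C ∩ V)
    (hC : ∀ t : Closeds (Pt F m), IsIrreducible (t : Set (Pt F m)) → t ≤ C →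
      Tendsto (ratio H (t ∩ V) V) atTop (𝓝 0)) :
    Tendsto (ratio H A V) atTop (𝓝 0) := by
  obtain ⟨T, hTirr, rfl⟩ := NoetherianSpace.exists_finset_irreducible C
  refine tendsto_ratio_zero_of_subset_biUnion hN T (fun t => t ∩ V) ?_
    fun t ht => hC t (hTirr ⟨t, ht⟩) (Finset.le_sup (f := id) ht)
  intro x hx
  obtain ⟨hxC, hxV⟩ := hA hx
  simp only [Closeds.coe_finset_sup, Finset.sup_set_eq_biUnion, Set.mem_iUnion] at hxC
  obtain ⟨t, ht, hxt⟩ := hxC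
  exact Set.mem_biUnion ht ⟨hxt, hxV⟩

variable (hN : ∀ B : ℝ, {x : Pt F m | H x ≤ B}.Finite) (hdagger : Dagger H)
  {V : Set (Pt F m)} (hV : IsLocallyClosed V) (hVinf : V.Infinite)
include hN hdagger hV hVinf

theorem exists_isIrreducible_hasPosDensityIn :
    ∃ Z : Closeds (Pt F m), IsIrreducible (Z : Set (Pt F m)) ∧ (Z : Set (Pt F m)) ⊆ closure V ∧
      HasPosDensityIn H (Z ∩ V) V := by
  by_contra! h
  have hV0 : Tendsto (ratio H V V) atTop (𝓝 0) :=
    tendsto_ratio_zero_of_subset_closeds hN ⟨closure V, isClosed_closure⟩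
      (fun x hx => ⟨subset_closure hx, hx⟩) fun t ht htV =>
        tendsto_ratio_zero_of_not_hasPosDensityIn hdagger (t.isClosed.isLocallyClosed.inter hV)
          hV Set.inter_subset_right hVinf (h t ht htV)
  exact one_ne_zero (tendsto_nhds_unique (tendsto_ratio_self hN hVinf.nonempty) hV0)

theorem tendsto_ratio_one_of_isDenseOpenIn_of_minimal {Z : Closeds (Pt F m)}
    (hZpos : HasPosDensityIn H (Z ∩ V) V)
    (hmin : ∀ t : Closeds (Pt F m), IsIrreducible (t : Set (Pt F m)) → t < Z →
      ¬ HasPosDensityIn H (t ∩ V) V)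
    {U : Set (Pt F m)} (hU : IsDenseOpenIn U (Z ∩ V)) :
    Tendsto (ratio H U (Z ∩ V)) atTop (𝓝 1) := by
  obtain ⟨⟨O, hO, rfl⟩, hdense⟩ := hU
  obtain ⟨w, hw⟩ := (hZpos.infinite hN hVinf).nonempty
  obtain ⟨u, ⟨huZ, -⟩, huO⟩ := closure_nonempty_iff.mp ⟨w, hdense hw⟩
  let D : Closeds (Pt F m) := ⟨Z ∩ Oᶜ, Z.isClosed.inter hO.isClosed_compl⟩
  have hDZ : D < Z :=
    SetLike.lt_iff_le_and_exists.mpr ⟨fun _ hx => hx.1, u, huZ, fun hu => hu.2 huO⟩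
  have hdiff : Tendsto (ratio H ((Z ∩ V) \ (Z ∩ V ∩ O)) V) atTop (𝓝 0) :=
    tendsto_ratio_zero_of_subset_closeds hN D
      (fun x hx => ⟨⟨hx.1.1, fun hxO => hx.2 ⟨hx.1, hxO⟩⟩, hx.1.2⟩) fun t ht htD =>
        tendsto_ratio_zero_of_not_hasPosDensityIn hdagger (t.isClosed.isLocallyClosed.inter hV)
          hV Set.inter_subset_right hVinf (hmin t ht (htD.trans_lt hDZ))
  obtain ⟨δ, hδ, hδpos⟩ := hZpos
  exact tendsto_ratio_one_of_tendsto_sdiff hN Set.inter_subset_left hδ hδpos.ne' hdiff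

end ProjSat

theorem exists_strongly_saturated_subvariety_general
    (F : Type) [Field F] (m : ℕ)
    (H : Pt F m → ℝ)
    (hNorthcott : ∀ B : ℝ, {x : Pt F m | H x ≤ B}.Finite)
    (hdagger : Dagger H)
    (V : Set (Pt F m)) (hV : IsLocallyClosed V) (hVinf : V.Infinite) :
    ∃ W : Set (Pt F m), IsLocallyClosed W ∧ W ⊆ V ∧ IsIrreducible W ∧
      StronglySaturated H W ∧
      ∃ L : ℝ, Tendsto (ratio H W V) atTop (𝓝 L) ∧ 0 < L := by
  obtain ⟨Z, ⟨hZirr, hZV, hZpos⟩, hmin⟩ := wellFounded_lt.has_min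
    {Z : TopologicalSpace.Closeds (Pt F m) | IsIrreducible (Z : Set (Pt F m)) ∧
      (Z : Set (Pt F m)) ⊆ closure V ∧ HasPosDensityIn H (Z ∩ V) V}
    (exists_isIrreducible_hasPosDensityIn hNorthcott hdagger hV hVinf)
  have hWinf := hZpos.infinite hNorthcott hVinf
  have hWirr : IsIrreducible ((Z : Set (Pt F m)) ∩ V) :=
    ⟨hWinf.nonempty, hZirr.2.inter_isLocallyClosed hZV hV⟩
  refine ⟨Z ∩ V, Z.isClosed.isLocallyClosed.inter hV, Set.inter_subset_right, hWirr,
    ⟨hWirr, hWinf, fun U hU => ?_⟩, hZpos⟩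
  exact tendsto_ratio_one_of_isDenseOpenIn_of_minimal hNorthcott hdagger hV hVinf hZpos
    (fun t ht htZ htpos => hmin t ⟨ht, fun _ hx => hZV (htZ.le hx), htpos⟩ htZ) hU

/-- **Existence of a strongly saturated subvariety with positive density.**
Assume Assumption (†).  Let `V` be a subvariety of `ℙ^m` over a number field `F` with
`V(F)` infinite.  Then `V` contains an irreducible locally closed subvariety `W ⊆ V`
which is strongly saturated and satisfies `lim_{B→∞} N(W,B)/N(V,B) > 0`. -/
theorem exists_strongly_saturated_subvariety
    (F : Type) [Field F] [NumberField F] (m : ℕ)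
    (H : Pt F m → ℝ) (hHpos : ∀ x, 0 < H x)
    (hNorthcott : ∀ B : ℝ, {x : Pt F m | H x ≤ B}.Finite)
    (hdagger : Dagger H)
    (V : Set (Pt F m)) (hV : IsLocallyClosed V) (hVinf : V.Infinite) :
    ∃ W : Set (Pt F m), IsLocallyClosed W ∧ W ⊆ V ∧ IsIrreducible W ∧
      StronglySaturated H W ∧
      ∃ L : ℝ, Tendsto (ratio H W V) atTop (𝓝 L) ∧ 0 < L :=
  exists_strongly_saturated_subvariety_general F m H hNorthcott hdagger V hV hVinf
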